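/- arXiv:1901.10270 — 2 statements merged into one kernel-verified Lean document; each statement's English description precedes it below -/
import Mathlib

section
/- Let V be the 10×10 integer matrix [[0,1,0,0,0,0,0,0,0,-1],[0,-1,0,0,0,0,0,0,0,0],[0,1,0,0,0,0,0,0,0,0],[0,0,1,1,1,0,0,0,0,0],[0,0,0,0,0,1,0,0,0,-1],[0,0,0,0,0,-1,0,0,0,0],[0,0,0,0,0,1,0,0,0,0],[0,0,0,0,0,0,1,2,1,0],[0,0,0,0,0,0,1,1,0,1],[0,0,1,0,0,0,1,0,0,2]], set Γ = -V·(Vᵗ - V)⁻¹ (an integer matrix), and let A = Γ³ - (Γ - I)³. Then the cokernel of A, viewed as a map ℤ¹⁰ → ℤ¹⁰, is isomorphic as an abelian group to (ℤ/7ℤ)⁴. -/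
/-!
Because `Vᵀ - V` is unimodular, `Γ` and `A` are explicit integer matrices. Explicit unimodular
`P`, `Q` (certified by right inverses) bring `A` to its Smith normal form
`diag(1, …, 1, 7, 7, 7, 7)`, and the cokernel of a diagonal matrix is the product of the cyclic
groups `ℤ/dᵢ`. All matrix identities are checked by `decide`.
-/

open Matrix

namespace Matrix

variable {n R : Type*} [Fintype n] [DecidableEq n] [CommRing R]

theorem mem_range_toLin'_diagonal_iff {d y : n → R} :
    y ∈ LinearMap.range (toLin' (diagonal d)) ↔ ∀ i, d i ∣ y i := by
  simp only [LinearMap.mem_range, toLin'_apply, mulVec_diagonal, funext_iff]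
  constructor
  · rintro ⟨x, hx⟩ i
    exact ⟨x i, (hx i).symm⟩
  · intro h
    choose x hx using h
    exact ⟨x, fun i => (hx i).symm⟩

theorem range_toLin'_mul_mul (A P Q : Matrix n n R) [Invertible Q] :
    LinearMap.range (toLin' (P * A * Q)) = (LinearMap.range (toLin' A)).map (toLin' P) := by
  have hQ : LinearMap.range (toLin' Q) = ⊤ := (Q.toLinearEquiv' ‹_›).range
  rw [toLin'_mul, LinearMap.range_comp_of_range_eq_top _ hQ, toLin'_mul, LinearMap.range_comp]

noncomputable def quotRangeEquivOfMulMul {A B : Matrix n n R} (P Q : Matrix n n R)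
    [Invertible P] [Invertible Q] (h : P * A * Q = B) :
    ((n → R) ⧸ LinearMap.range (toLin' A)) ≃ₗ[R] (n → R) ⧸ LinearMap.range (toLin' B) :=
  Submodule.Quotient.equiv _ _ (P.toLinearEquiv' ‹_›) (h ▸ range_toLin'_mul_mul A P Q).symm

end Matrix

theorem ker_intCast_comp_funLeft_natAdd (m n k : ℕ) :
    LinearMap.ker ((LinearMap.compLeft (Int.castAddHom (ZMod k)).toIntLinearMap (Fin n)).comp
      (LinearMap.funLeft ℤ ℤ (Fin.natAdd m))) =
    LinearMap.range
      (toLin' (diagonal (Fin.append (fun _ : Fin m => 1) fun _ : Fin n => (k : ℤ)))) := by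
  ext x
  rw [mem_range_toLin'_diagonal_iff, Fin.forall_fin_add]
  simp [funext_iff, ZMod.intCast_zmod_eq_zero_iff_dvd]

noncomputable def quotRangeDiagonalEquiv (m n k : ℕ) :
    ((Fin (m + n) → ℤ) ⧸ LinearMap.range
      (toLin' (diagonal (Fin.append (fun _ : Fin m => 1) fun _ : Fin n => (k : ℤ))))) ≃ₗ[ℤ]
      (Fin n → ZMod k) :=
  (Submodule.quotEquivOfEq _ _ (ker_intCast_comp_funLeft_natAdd m n k).symm).trans <|
    LinearMap.quotKerEquivOfSurjective _ <|
      ZMod.intCast_surjective.comp_left.comp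
        (LinearMap.funLeft_surjective_of_injective _ _ _ (Fin.natAdd_injective n m))

def skewSeifertInv : Matrix (Fin 10) (Fin 10) ℤ :=
  !![0, 1, 0, 1, 0, 1, 0, 1, 0, 0;
     -1, 0, 0, 0, 0, 0, 0, 1, -1, 0;
     0, 0, 0, -1, 0, -1, 0, -1, 0, 0;
     -1, 0, 1, 0, 0, 0, 0, 0, 0, 0;
     0, 0, 0, 0, 0, 1, 0, 1, 0, 0;
     -1, 0, 1, 0, -1, 0, 0, 1, -1, 0;
     0, 0, 0, 0, 0, 0, 0, -1, 0, 0;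
     -1, -1, 1, 0, -1, -1, 1, 0, 0, -1;
     0, 1, 0, 0, 0, 1, 0, 0, 0, 1;
     0, 0, 0, 0, 0, 0, 0, 1, -1, 0]
def gamma : Matrix (Fin 10) (Fin 10) ℤ :=
  !![1, 0, 0, 0, 0, 0, 0, 0, 0, 0;
     -1, 0, 0, 0, 0, 0, 0, 1, -1, 0;
     1, 0, 0, 0, 0, 0, 0, -1, 1, 0;
     1, 0, -1, 1, 0, 0, 0, 0, 0, 0;
     1, 0, -1, 0, 1, 0, 0, 0, 0, 0;
     -1, 0, 1, 0, -1, 0, 0, 1, -1, 0;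
     1, 0, -1, 0, 1, 0, 0, -1, 1, 0;
     2, 1, -2, 0, 2, 1, -2, 1, 0, 1;
     1, 1, -1, 0, 1, 1, -1, 0, 1, 1;
     0, 0, 0, 1, 0, 1, 0, 0, 2, 0]
def presentation : Matrix (Fin 10) (Fin 10) ℤ :=
  !![1, 0, 0, 0, 0, 0, 0, 0, 0, 0;
     3, 1, -3, 0, 3, 0, -3, 0, 0, 0;
     -3, 0, 4, 0, -3, 0, 3, 0, 0, 0;
     0, 0, 0, 1, 0, 0, 0, 3, -3, 0;
     0, 0, 0, 0, 1, 0, 0, 3, -3, 0;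
     3, 0, -3, 0, 3, 1, -3, -3, 3, 0;
     -3, 0, 3, 0, -3, 0, 4, 3, -3, 0;
     -6, 0, 3, 3, -3, 3, 0, 19, -12, 0;
     -6, 0, 3, 3, -3, 3, 0, 12, -5, 0;
     6, 6, -6, 0, 3, 3, -6, 3, -3, 7]
def smithLeft : Matrix (Fin 10) (Fin 10) ℤ :=
  !![1, 0, 0, 0, 0, 0, 0, 0, 0, 0;
     -3, 1, 0, 0, 0, 0, 0, 0, 0, 0;
     0, 0, 0, 1, 0, 0, 0, 0, 0, 0;
     0, 0, 0, 0, 1, 0, 0, 0, 0, 0;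
     -3, 0, 0, 0, -3, 1, 0, 0, 0, 0;
     3, 0, 1, 0, 3, 0, 0, 0, 0, 0;
     6, 0, 1, 0, 6, 0, 1, 0, 0, 0;
     3, -6, -3, 0, 6, -3, -3, 0, 0, 1;
     6, 0, -3, -3, 3, -3, 0, 0, 1, 0;
     -6, 0, 3, 3, -3, 3, 0, 1, -2, 0]
def smithRight : Matrix (Fin 10) (Fin 10) ℤ :=
  !![1, 0, 0, 0, 0, 0, 0, 0, 0, 0;
     0, 1, 0, -3, 0, 0, 3, 0, 0, 0;
     0, 0, 0, 0, 0, 1, -3, 0, 0, 0;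
     0, 0, 1, 0, 0, 0, 0, 0, -3, -3;
     0, 0, 0, 1, 0, 0, 0, 0, -3, -3;
     0, 0, 0, 0, 1, 0, 3, 0, 3, 3;
     0, 0, 0, 0, 0, -1, 4, 0, -3, -3;
     0, 0, 0, 0, 0, 0, 0, 0, -1, -2;
     0, 0, 0, 0, 0, 0, 0, 0, -2, -3;
     0, 0, 0, 0, 0, 0, 0, 1, -3, -3]
def smithLeftInv : Matrix (Fin 10) (Fin 10) ℤ :=
  !![1, 0, 0, 0, 0, 0, 0, 0, 0, 0;
     3, 1, 0, 0, 0, 0, 0, 0, 0, 0;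
     -3, 0, 0, -3, 0, 1, 0, 0, 0, 0;
     0, 0, 1, 0, 0, 0, 0, 0, 0, 0;
     0, 0, 0, 1, 0, 0, 0, 0, 0, 0;
     3, 0, 0, 3, 1, 0, 0, 0, 0, 0;
     -3, 0, 0, -3, 0, -1, 1, 0, 0, 0;
     -6, 0, 3, -3, 3, 3, 0, 0, 2, 1;
     -6, 0, 3, -3, 3, 3, 0, 0, 1, 0;
     6, 6, 0, -15, 3, 0, 3, 1, 0, 0]
def smithRightInv : Matrix (Fin 10) (Fin 10) ℤ :=
  !![1, 0, 0, 0, 0, 0, 0, 0, 0, 0;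
     0, 1, -3, 0, 3, 0, -3, 0, 0, 0;
     0, 0, 0, 1, 0, 0, 0, 3, -3, 0;
     0, 0, 0, 0, 1, 0, 0, 3, -3, 0;
     0, 0, -3, 0, 0, 1, -3, -12, 12, 0;
     0, 0, 4, 0, 0, 0, 3, 9, -9, 0;
     0, 0, 1, 0, 0, 0, 1, 3, -3, 0;
     0, 0, 0, 0, 0, 0, 0, 3, -3, 1;
     0, 0, 0, 0, 0, 0, 0, 3, -2, 0;
     0, 0, 0, 0, 0, 0, 0, -2, 1, 0]

/-- For the Seifert matrix V of K = D₄(2), with Γ = -V(Vᵗ-V)⁻¹ and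
A = Γ³ - (Γ-I)³, the cokernel of A : ℤ¹⁰ → ℤ¹⁰ is isomorphic to (ℤ/7)⁴. -/
theorem homology_threefold_cover_K :
    let V : Matrix (Fin 10) (Fin 10) ℤ :=
      !![0,1,0,0,0,0,0,0,0,-1;
         0,-1,0,0,0,0,0,0,0,0;
         0,1,0,0,0,0,0,0,0,0;
         0,0,1,1,1,0,0,0,0,0;
         0,0,0,0,0,1,0,0,0,-1;
         0,0,0,0,0,-1,0,0,0,0;
         0,0,0,0,0,1,0,0,0,0;
         0,0,0,0,0,0,1,2,1,0;
         0,0,0,0,0,0,1,1,0,1;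
         0,0,1,0,0,0,1,0,0,2]
    let Γ : Matrix (Fin 10) (Fin 10) ℤ := -V * (Vᵀ - V)⁻¹
    let A : Matrix (Fin 10) (Fin 10) ℤ := Γ ^ 3 - (Γ - 1) ^ 3
    Nonempty (((Fin 10 → ℤ) ⧸ LinearMap.range (Matrix.toLin' A)) ≃+
      (Fin 4 → ZMod 7)) := by
  intro V Γ A
  have hΓ : Γ = gamma := by
    change -V * (Vᵀ - V)⁻¹ = gamma
    rw [inv_eq_right_inv (B := skewSeifertInv) (by decide)]
    decide
  have hA : A = presentation := by
    change Γ ^ 3 - (Γ - 1) ^ 3 = presentation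
    rw [hΓ]
    decide
  have hSmith : smithLeft * A * smithRight =
      diagonal (Fin.append (fun _ : Fin 6 => 1) fun _ : Fin 4 => (7 : ℤ)) := by
    rw [hA]
    decide
  have := invertibleOfRightInverse smithLeft smithLeftInv (by decide)
  have := invertibleOfRightInverse smithRight smithRightInv (by decide)
  exact ⟨((quotRangeEquivOfMulMul _ _ hSmith).trans (quotRangeDiagonalEquiv 6 4 7)).toAddEquiv⟩
end

section
/- Let V' be the 8×8 integer matrix [[0,0,0,0,0,0,0,1],[1,1,-1,0,0,0,0,0],[0,0,0,1,0,0,0,1],[0,0,0,-1,0,0,0,0],[0,0,0,-1,0,0,0,0],[0,0,0,0,-1,1,0,0],[0,0,0,0,1,0,-1,1],[1,0,0,0,1,0,0,2]], set Γ' = -V'·(V'ᵗ - V')⁻¹, and let A' = Γ'³ - (Γ' - I)³. Then the cokernel of A', viewed as a map ℤ⁸ → ℤ⁸, is isomorphic as an abelian group to ℤ/49ℤ ⊕ ℤ/49ℤ. -/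
/-!
Because `V'ᵀ - V'` is unimodular, `Γ'` and `A'` are integer matrices and can be computed exactly.
`A'` has Smith normal form `diag(1, 1, 1, 1, 1, 1, 49, 49)`: `A' = P · D · Q` with `P`, `Q`
unimodular. Multiplying by unimodular matrices does not change the cokernel, and the cokernel of a
diagonal matrix is `⨁ ℤ/dᵢ`, which here is `ℤ/49 ⊕ ℤ/49`.
-/

open Matrix

section Cokernel

variable {R : Type*} [CommRing R] {m n : Type*} [Fintype n] [DecidableEq n]

theorem Matrix.range_toLin'_mul_of_mul_eq_one (D : Matrix m n R) {Q Q' : Matrix n n R}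
    (hQ : Q * Q' = 1) : LinearMap.range (toLin' (D * Q)) = LinearMap.range (toLin' D) := by
  rw [toLin'_mul]
  exact LinearMap.range_comp_of_range_eq_top _ <| LinearMap.range_eq_top_of_surjective _ <|
    mulVec_surjective_iff_exists_right_inverse.2 ⟨Q', hQ⟩

theorem Matrix.range_toLin'_diagonal (d : n → R) :
    LinearMap.range (toLin' (diagonal d)) = Submodule.pi Set.univ fun i ↦ Ideal.span {d i} := by
  ext y
  simp only [LinearMap.mem_range, toLin'_apply, mulVec_diagonal, Submodule.mem_pi,
    Set.mem_univ, forall_const, Ideal.mem_span_singleton', funext_iff]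
  constructor
  · rintro ⟨x, hx⟩ i
    exact ⟨x i, by rw [← hx i, mul_comm]⟩
  · intro h
    choose x hx using h
    exact ⟨x, fun i ↦ by rw [← hx i, mul_comm]⟩

def Matrix.quotRangeToLin'DiagonalEquiv (d : n → R) :
    ((n → R) ⧸ LinearMap.range (toLin' (diagonal d))) ≃ₗ[R] ∀ i, R ⧸ Ideal.span {d i} :=
  (Submodule.quotEquivOfEq _ _ (range_toLin'_diagonal d)).trans (Submodule.quotientPi _)

variable [Fintype m] [DecidableEq m]

def Matrix.quotRangeToLin'MulMulEquiv (D : Matrix m n R) {P P' : Matrix m m R}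
    {Q Q' : Matrix n n R} (hP : P * P' = 1) (hQ : Q * Q' = 1) :
    ((m → R) ⧸ LinearMap.range (toLin' (P * D * Q))) ≃ₗ[R]
      (m → R) ⧸ LinearMap.range (toLin' D) :=
  (Submodule.quotEquivOfEq _ _ (range_toLin'_mul_of_mul_eq_one _ hQ)).trans <|
    (Submodule.Quotient.equiv _ _ (P.toLinearEquiv' (invertibleOfRightInverse P P' hP))
      (by rw [toLin'_mul, LinearMap.range_comp]; rfl)).symm

end Cokernel

namespace KPrime

/-- The inverse of `V'ᵀ - V'`. -/
def skewInv : Matrix (Fin 8) (Fin 8) ℤ :=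
  !![0,-1,0,1,0,1,0,0; 1,0,0,0,0,0,0,0; 0,0,0,1,0,1,0,0; -1,0,-1,0,0,1,1,0;
     0,0,0,0,0,1,0,0; -1,0,-1,-1,-1,0,0,1; 0,0,0,-1,0,0,0,1; 0,0,0,0,0,-1,-1,0]

abbrev elementaryDivisors : Fin 8 → ℕ := ![1, 1, 1, 1, 1, 1, 49, 49]

-- A Smith normal form `A' = snfLeft * diagonal elementaryDivisors * snfRight`, computed
-- externally; the right inverses certify that `snfLeft` and `snfRight` are unimodular.
def snfLeft : Matrix (Fin 8) (Fin 8) ℤ :=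
  !![0,3,0,1,0,0,0,0; 1,0,0,0,0,0,0,0; 0,1,0,0,0,0,0,0; 0,3,1,0,0,0,0,0;
     0,3,0,-1,0,-511,10,1; -3,-3,3,-3,22,-49,1,0; 3,3,-3,3,-1,0,0,0;
     0,3,-3,0,-63,-510,10,1]

def snfLeftInv : Matrix (Fin 8) (Fin 8) ℤ :=
  !![0,1,0,0,0,0,0,0; 0,0,1,0,0,0,0,0; 0,0,-3,1,0,0,0,0; 1,0,-3,0,0,0,0,0;
     3,3,3,-3,0,0,-1,0; 188,189,183,-186,-1,0,-63,1;
     9149,9198,8904,-9051,-49,1,-3065,49; 4579,4599,4467,-4536,-20,-10,-1543,21]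

def snfRight : Matrix (Fin 8) (Fin 8) ℤ :=
  !![0,1,0,0,0,-3,-3,0; 0,0,1,0,0,3,3,0; 3,0,0,1,3,-12,-12,0; 4,0,0,0,3,-9,-9,0;
     0,0,0,0,0,12,5,0; 2,0,0,0,2,729,288,7; 2,0,0,0,2,724,286,7; 1,0,0,0,1,362,143,3]

def snfRightInv : Matrix (Fin 8) (Fin 8) ℤ :=
  !![0,0,0,1,0,219,-210,-21; 1,0,0,0,9,-21,21,0; 0,1,0,0,-9,21,-21,0;
     0,0,1,0,9,198,-189,-21; 0,0,0,-1,9,-313,301,28; 0,0,0,0,-2,5,-5,0;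
     0,0,0,0,5,-12,12,0; 0,0,0,0,0,0,1,-2]

def piZModElementaryDivisorsEquiv : (∀ i, ZMod (elementaryDivisors i)) ≃+ ZMod 49 × ZMod 49 where
  toFun f := (f 6, f 7)
  invFun z := Fin.cons 0 <| Fin.cons 0 <| Fin.cons 0 <| Fin.cons 0 <| Fin.cons 0 <| Fin.cons 0 <|
    Fin.cons z.1 <| Fin.cons z.2 finZeroElim
  left_inv f := by
    funext i
    fin_cases i <;>
      first | rfl | exact @Subsingleton.elim _ (ZMod.subsingleton_iff.2 rfl) _ _
  right_inv _ := rfl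
  map_add' _ _ := rfl

end KPrime

open KPrime in
/-- For the Seifert matrix V' of K' = D'₄(2), with Γ' = -V'(V'ᵗ-V')⁻¹ and
A' = Γ'³ - (Γ'-I)³, the cokernel of A' : ℤ⁸ → ℤ⁸ is isomorphic to ℤ/49 ⊕ ℤ/49. -/
theorem homology_threefold_cover_K' :
    let V' : Matrix (Fin 8) (Fin 8) ℤ :=
      !![0,0,0,0,0,0,0,1;
         1,1,-1,0,0,0,0,0;
         0,0,0,1,0,0,0,1;
         0,0,0,-1,0,0,0,0;
         0,0,0,-1,0,0,0,0;
         0,0,0,0,-1,1,0,0;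
         0,0,0,0,1,0,-1,1;
         1,0,0,0,1,0,0,2]
    let Γ' : Matrix (Fin 8) (Fin 8) ℤ := -V' * (V'ᵀ - V')⁻¹
    let A' : Matrix (Fin 8) (Fin 8) ℤ := Γ' ^ 3 - (Γ' - 1) ^ 3
    Nonempty (((Fin 8 → ℤ) ⧸ LinearMap.range (Matrix.toLin' A')) ≃+
      (ZMod 49 × ZMod 49)) := by
  intro V' Γ' A'
  have hskew : (V'ᵀ - V')⁻¹ = skewInv := inv_eq_right_inv (by decide)
  have hsnf : A' = snfLeft * diagonal (fun i ↦ (elementaryDivisors i : ℤ)) * snfRight := by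
    show (-V' * (V'ᵀ - V')⁻¹) ^ 3 - (-V' * (V'ᵀ - V')⁻¹ - 1) ^ 3 = _
    rw [hskew]
    decide
  rw [hsnf]
  have hleft : snfLeft * snfLeftInv = 1 := by decide
  have hright : snfRight * snfRightInv = 1 := by decide
  exact ⟨((quotRangeToLin'MulMulEquiv _ hleft hright).trans
    (quotRangeToLin'DiagonalEquiv _)).toAddEquiv.trans <|
    (AddEquiv.piCongrRight fun i ↦ (Int.quotientSpanNatEquivZMod _).toAddEquiv).trans
      piZModElementaryDivisorsEquiv⟩
end
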